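/- There exists a constant C > 0 such that for every n ≥ 4: |E[(Ĩ_{1,2})² · Ĩ_{3,4}]| ≤ C/n, i.e. the third-order moment E[(Ĩ_{1,2})² Ĩ_{3,4}] (with the four indices 1,2,3,4 pairwise distinct) is O(n^{−1}). -/

import Mathlib

/-!
Ties have probability zero because the law is atomless, so the ranks of the sample are a
permutation of `1, …, n`. For distinct ranks the off-diagonal kernel sums to zero,
`∑_{i ≠ j} Ĩ_{i,j} = 0`, an identity between the power sums of `1, …, n`. By exchangeability all
`(n-2)(n-3)` pairs `(k, l)` avoiding `{1, 2}` give the same moment `E[Ĩ_{1,2}² Ĩ_{k,l}]`, so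
`(n-2)(n-3)` times the moment equals `-E[Ĩ_{1,2}² ∑ Ĩ_{k,l}]`, the sum running over the at most `4n`
remaining pairs. Since `|Ĩ| ≤ 4`, this is `O(n)`.
-/

open MeasureTheory ProbabilityTheory Filter Finset Topology

noncomputable section

/-- The rank `R_i` of `X_i` among `X_1, …, X_n` (as a real number). -/
def rank1 {Ω : Type} {n : ℕ} (X : Fin n → Ω → ℝ) (i : Fin n) (ω : Ω) : ℝ :=
  ∑ j : Fin n, if X j ω ≤ X i ω then (1 : ℝ) else 0

/-- The quantity `I_{i,j}`. -/
def I1 {Ω : Type} {n : ℕ} (X : Fin n → Ω → ℝ) (i j : Fin n) (ω : Ω) : ℝ :=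
  (2 * (n : ℝ) + 1) / (6 * (n : ℝ))
    + rank1 X i ω * (rank1 X i ω - 1) / (2 * (n : ℝ) * ((n : ℝ) + 1))
    + rank1 X j ω * (rank1 X j ω - 1) / (2 * (n : ℝ) * ((n : ℝ) + 1))
    - max (rank1 X i ω) (rank1 X j ω) / ((n : ℝ) + 1)

/-- The centred quantity `Ĩ_{i,j}`. -/
def Itil1 {Ω : Type} {n : ℕ} (X : Fin n → Ω → ℝ) (i j : Fin n) (ω : Ω) : ℝ :=
  if i = j then I1 X i j ω - (1 / 6 - 1 / (6 * (n : ℝ)))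
  else I1 X i j ω + 1 / (6 * (n : ℝ))

/-- The basic model assumptions: measurability, `X_1, …, X_n` are i.i.d. real-valued
random variables, and their common cdf is continuous. -/
def IID1 {Ω : Type} [MeasurableSpace Ω] {n : ℕ} (X : Fin n → Ω → ℝ)
    (P : Measure Ω) : Prop :=
  (∀ i, Measurable (X i)) ∧
  iIndepFun X P ∧
  (∀ i j : Fin n, Measure.map (X i) P = Measure.map (X j) P) ∧
  (∀ i : Fin n, Continuous fun t : ℝ => (P {ω | X i ω ≤ t}).toReal)

section Ranks

variable {Ω : Type} {n : ℕ}

lemma one_le_rank1 (X : Fin n → Ω → ℝ) (i : Fin n) (ω : Ω) : 1 ≤ rank1 X i ω := by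
  unfold rank1
  calc (1 : ℝ) = if X i ω ≤ X i ω then 1 else 0 := by simp
    _ ≤ _ := single_le_sum (f := fun j => if X j ω ≤ X i ω then (1 : ℝ) else 0)
      (fun j _ => by split_ifs <;> norm_num) (mem_univ i)

lemma rank1_le (X : Fin n → Ω → ℝ) (i : Fin n) (ω : Ω) : rank1 X i ω ≤ n := by
  unfold rank1
  calc _ ≤ ∑ _j : Fin n, (1 : ℝ) := sum_le_sum fun j _ => by split_ifs <;> norm_num
    _ = n := by simp

lemma abs_Itil1_le (X : Fin n → Ω → ℝ) (i j : Fin n) (ω : Ω) : |Itil1 X i j ω| ≤ 4 := by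
  have hn : (1 : ℝ) ≤ n := (one_le_rank1 X i ω).trans (rank1_le X i ω)
  have unit_bounds : ∀ k, 0 ≤ rank1 X k ω * (rank1 X k ω - 1) / (2 * n * (n + 1)) ∧
      rank1 X k ω * (rank1 X k ω - 1) / (2 * n * (n + 1)) ≤ 1 := fun k => by
    have h1 := one_le_rank1 X k ω
    have h2 := rank1_le X k ω
    exact ⟨div_nonneg (mul_nonneg (by linarith) (by linarith)) (by positivity),
      by rw [div_le_one (by positivity)]; nlinarith⟩
  have hmax : 0 ≤ max (rank1 X i ω) (rank1 X j ω) / (n + 1) ∧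
      max (rank1 X i ω) (rank1 X j ω) / (n + 1) ≤ 1 := by
    have := one_le_rank1 X i ω
    refine ⟨div_nonneg (by positivity) (by positivity), ?_⟩
    rw [div_le_one (by positivity)]
    exact max_le (by linarith [rank1_le X i ω]) (by linarith [rank1_le X j ω])
  have hconst : (2 * (n : ℝ) + 1) / (6 * n) ≤ 1 := by rw [div_le_one (by positivity)]; linarith
  have hsmall : 1 / (6 * (n : ℝ)) ≤ 1 := by rw [div_le_one (by positivity)]; linarith
  have := unit_bounds i
  have := unit_bounds j
  unfold Itil1 I1
  split_ifs <;> rw [abs_le] <;> constructor <;>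
    nlinarith [show 0 ≤ (2 * (n : ℝ) + 1) / (6 * n) by positivity,
      show 0 ≤ 1 / (6 * (n : ℝ)) by positivity]

lemma measurable_rank1 [MeasurableSpace Ω] {X : Fin n → Ω → ℝ} (hX : ∀ k, Measurable (X k))
    (i : Fin n) : Measurable (rank1 X i) :=
  Finset.measurable_sum _ fun j _ =>
    Measurable.ite (measurableSet_le (hX j) (hX i)) measurable_const measurable_const

lemma measurable_Itil1 [MeasurableSpace Ω] {X : Fin n → Ω → ℝ} (hX : ∀ k, Measurable (X k))
    (i j : Fin n) : Measurable (Itil1 X i j) := by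
  have hi := measurable_rank1 hX i
  have hj := measurable_rank1 hX j
  unfold Itil1 I1
  split_ifs <;> fun_prop

end Ranks

section RankNat

variable {n : ℕ}

/-- The canonical sample on `Fin n → ℝ`: `Itil1 coord i j x` is `Ĩ_{i,j}` evaluated at the data
vector `x`, and under `Measure.pi (fun _ => ν)` the coordinates are i.i.d. with law `ν`. -/
def coord (k : Fin n) (x : Fin n → ℝ) : ℝ := x k

def rankNat (x : Fin n → ℝ) (i : Fin n) : ℕ := #{j | x j ≤ x i}

lemma rank1_coord (x : Fin n → ℝ) (i : Fin n) : rank1 coord i x = rankNat x i := by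
  simp only [rank1, rankNat, coord, natCast_card_filter]
  exact sum_congr rfl fun j _ => by congr

lemma rankNat_lt_rankNat {x : Fin n → ℝ} {i j : Fin n} (h : x i < x j) :
    rankNat x i < rankNat x j := by
  refine Finset.card_lt_card ⟨fun k hk => ?_, fun hsub => ?_⟩
  · simp only [mem_filter, mem_univ, true_and] at hk ⊢
    exact hk.trans h.le
  · have := hsub (by simp : j ∈ ({k | x k ≤ x j} : Finset (Fin n)))
    simp only [mem_filter, mem_univ, true_and] at this
    exact this.not_gt h

lemma rankNat_injective {x : Fin n → ℝ} (hx : Function.Injective x) :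
    Function.Injective (rankNat x) := by
  intro i j hij
  rcases lt_trichotomy (x i) (x j) with h | h | h
  · exact absurd hij (rankNat_lt_rankNat h).ne
  · exact hx h
  · exact absurd hij (rankNat_lt_rankNat h).ne'

lemma image_rankNat {x : Fin n → ℝ} (hx : Function.Injective x) :
    univ.image (rankNat x) = Icc 1 n := by
  refine eq_of_subset_of_card_le (fun a ha => ?_) ?_
  · obtain ⟨i, -, rfl⟩ := mem_image.mp ha
    exact mem_Icc.mpr ⟨card_pos.mpr ⟨i, by simp⟩, card_le_univ _ |>.trans (by simp)⟩
  · rw [card_image_of_injective _ (rankNat_injective hx)]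
    simp

lemma sum_rankNat {M : Type*} [AddCommMonoid M] {x : Fin n → ℝ} (hx : Function.Injective x)
    (g : ℕ → M) : ∑ i, g (rankNat x i) = ∑ a ∈ Icc 1 n, g a := by
  rw [← image_rankNat hx, sum_image fun i _ j _ h => rankNat_injective hx h]

end RankNat

lemma sum_Icc_cast (n : ℕ) : ∑ a ∈ Icc 1 n, (a : ℝ) = n * (n + 1) / 2 := by
  induction n with
  | zero => simp
  | succ m ih =>
    rw [sum_Icc_succ_top (by omega), ih]
    push_cast; ring

lemma sum_Icc_mul_sub_one (n : ℕ) :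
    ∑ a ∈ Icc 1 n, (a : ℝ) * (a - 1) = n * (n + 1) * (n - 1) / 3 := by
  induction n with
  | zero => simp
  | succ m ih =>
    rw [sum_Icc_succ_top (by omega), ih]
    push_cast; ring

lemma sum_Icc_sum_Icc_max (n : ℕ) :
    ∑ a ∈ Icc 1 n, ∑ b ∈ Icc 1 n, max (a : ℝ) b = n * (n + 1) * (4 * n - 1) / 6 := by
  induction n with
  | zero => simp
  | succ m ih =>
    have hmax : ∀ a ∈ Icc 1 m,
        max (a : ℝ) (m + 1 : ℕ) = m + 1 ∧ max ((m + 1 : ℕ) : ℝ) a = m + 1 := fun a ha => by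
        have : (a : ℝ) ≤ m + 1 := by norm_cast; simp at ha; omega
        push_cast; exact ⟨max_eq_right this, max_eq_left this⟩
    simp only [sum_Icc_succ_top (show 1 ≤ m + 1 by omega), sum_add_distrib]
    rw [sum_congr rfl fun a ha => (hmax a ha).1, sum_congr rfl fun a ha => (hmax a ha).2, ih]
    simp
    ring

lemma Finset.sum_offDiag_eq_sub {α M : Type*} [DecidableEq α] [AddCommGroup M] (s : Finset α)
    (f : α → α → M) :
    ∑ p ∈ s.offDiag, f p.1 p.2 = ∑ i ∈ s, ∑ j ∈ s, f i j - ∑ i ∈ s, f i i := by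
  rw [eq_sub_iff_add_eq, ← sum_diag s (fun p => f p.1 p.2), add_comm,
    ← sum_union (disjoint_diag_offDiag s), diag_union_offDiag, sum_product]

def itilOfRanks (n : ℕ) (r s : ℝ) : ℝ :=
  (2 * (n : ℝ) + 1) / (6 * n) + r * (r - 1) / (2 * n * (n + 1))
    + s * (s - 1) / (2 * n * (n + 1)) - max r s / (n + 1) + 1 / (6 * n)

lemma sum_Icc_sum_Icc_itilOfRanks (n : ℕ) :
    ∑ a ∈ Icc 1 n, ∑ b ∈ Icc 1 n, itilOfRanks n a b =
      ∑ a ∈ Icc 1 n, itilOfRanks n a a := by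
  rcases Nat.eq_zero_or_pos n with rfl | hn
  · simp
  have hsq := sum_Icc_mul_sub_one n
  have hmax := sum_Icc_sum_Icc_max n
  have hsum := sum_Icc_cast n
  simp only [itilOfRanks, max_self, sum_add_distrib, sum_sub_distrib, sum_const, Nat.card_Icc,
    ← sum_div, nsmul_eq_mul, ← mul_sum, hsq, hmax, hsum]
  have : (0 : ℝ) < n := by exact_mod_cast hn
  field_simp
  push_cast
  ring

lemma Itil1_coord_of_ne {n : ℕ} (x : Fin n → ℝ) {i j : Fin n} (hij : i ≠ j) :
    Itil1 coord i j x = itilOfRanks n (rankNat x i) (rankNat x j) := by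
  simp only [Itil1, if_neg hij, I1, rank1_coord, itilOfRanks]

lemma sum_offDiag_Itil1_coord_eq_zero {n : ℕ} {x : Fin n → ℝ} (hx : Function.Injective x) :
    ∑ p ∈ univ.offDiag, Itil1 coord p.1 p.2 x = 0 := by
  rw [sum_congr rfl fun p hp => Itil1_coord_of_ne x (mem_offDiag.mp hp).2.2,
    Finset.sum_offDiag_eq_sub univ (fun i j => itilOfRanks n (rankNat x i) (rankNat x j)),
    sum_rankNat hx (fun a => itilOfRanks n a a),
    sum_rankNat hx (fun a => ∑ j, itilOfRanks n a (rankNat x j)),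
    sum_congr rfl fun (a : ℕ) _ => sum_rankNat hx (fun b : ℕ => itilOfRanks n a b),
    sum_Icc_sum_Icc_itilOfRanks, sub_self]

lemma injective_vecCons_four {α : Type*} [DecidableEq α] {a b c d : α} (hab : a ≠ b)
    (hcd : c ≠ d) (hc : c ∉ ({a, b} : Finset α)) (hd : d ∉ ({a, b} : Finset α)) :
    Function.Injective ![a, b, c, d] := by
  simp only [mem_insert, mem_singleton, not_or] at hc hd
  intro i j h
  fin_cases i <;> fin_cases j <;> simp_all [eq_comm]

lemma card_offDiag_sdiff_offDiag_le {α : Type*} [Fintype α] [DecidableEq α] (t : Finset α) :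
    #(univ.offDiag \ (univ \ t).offDiag) ≤ 2 * #t * Fintype.card α := by
  have hsub : univ.offDiag \ (univ \ t).offDiag ⊆ t ×ˢ univ ∪ univ ×ˢ t := by
    intro p hp
    simp only [Finset.mem_sdiff, mem_offDiag, mem_univ, true_and, not_and] at hp
    simp only [mem_union, mem_product, mem_univ, and_true, true_and]
    by_contra! h
    exact hp.2 h.1 h.2 hp.1
  calc _ ≤ #(t ×ˢ univ ∪ univ ×ˢ t) := card_le_card hsub
    _ ≤ #(t ×ˢ (univ : Finset α)) + #((univ : Finset α) ×ˢ t) := card_union_le _ _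
    _ = 2 * #t * Fintype.card α := by simp only [card_product, card_univ]; ring

lemma card_offDiag_compl_pair {n : ℕ} {a b : Fin n} (hab : a ≠ b) :
    (#(univ \ {a, b}).offDiag : ℝ) = (n - 2) * (n - 3) := by
  have h2 : 2 ≤ n := by simpa [card_pair hab] using card_le_univ ({a, b} : Finset (Fin n))
  rw [offDiag_card, card_sdiff_of_subset (subset_univ _), card_pair hab, card_univ,
    Fintype.card_fin, Nat.cast_sub (Nat.le_mul_self _), Nat.cast_mul, Nat.cast_sub h2]
  push_cast
  ring

lemma abs_sum_offDiag_compl_Itil1_coord_le {n : ℕ} {x : Fin n → ℝ}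
    (hx : Function.Injective x) (t : Finset (Fin n)) :
    |∑ p ∈ (univ \ t).offDiag, Itil1 coord p.1 p.2 x| ≤ 8 * #t * n := by
  have hsub : (univ \ t).offDiag ⊆ univ.offDiag := offDiag_mono (subset_univ _)
  have hcard : (#(univ.offDiag \ (univ \ t).offDiag) : ℝ) ≤ 2 * #t * n := by
    exact_mod_cast (card_offDiag_sdiff_offDiag_le t).trans_eq (by rw [Fintype.card_fin])
  calc |∑ p ∈ (univ \ t).offDiag, Itil1 coord p.1 p.2 x|
      = |∑ p ∈ univ.offDiag \ (univ \ t).offDiag, Itil1 coord p.1 p.2 x| := by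
        rw [sum_sdiff_eq_sub hsub, sum_offDiag_Itil1_coord_eq_zero hx, zero_sub, abs_neg]
    _ ≤ ∑ p ∈ univ.offDiag \ (univ \ t).offDiag, |Itil1 coord p.1 p.2 x| :=
        abs_sum_le_sum_abs _ _
    _ ≤ #(univ.offDiag \ (univ \ t).offDiag) • (4 : ℝ) :=
        sum_le_card_nsmul _ _ _ fun p _ => abs_Itil1_le _ _ _ _
    _ ≤ 8 * #t * n := by rw [nsmul_eq_mul]; linarith

lemma nullSingletonClass_of_continuous_cdf {ν : Measure ℝ} [IsProbabilityMeasure ν]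
    (h : Continuous (cdf ν)) : NullSingletonClass ν where
  measure_singleton t := by
    rw [← measure_cdf ν, StieltjesFunction.measure_singleton,
      (h.continuousAt.continuousWithinAt).leftLim_eq, sub_self, ENNReal.ofReal_zero]

lemma ProbabilityTheory.IndepFun.ae_ne {Ω β : Type*} [MeasurableSpace Ω] [MeasurableSpace β]
    [MeasurableEq β] {P : Measure Ω} [IsFiniteMeasure P] {X Y : Ω → β} (hX : Measurable X)
    (hY : Measurable Y) [NullSingletonClass (P.map Y)] (h : IndepFun X Y P) :
    ∀ᵐ ω ∂P, X ω ≠ Y ω := by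
  rw [ae_iff]
  simp only [ne_eq, not_not]
  change P ((fun ω => (X ω, Y ω)) ⁻¹' Set.diagonal β) = 0
  rw [← Measure.map_apply (hX.prodMk hY) measurableSet_diagonal,
    (indepFun_iff_map_prod_eq_prod_map_map hX.aemeasurable hY.aemeasurable).mp h,
    Measure.prod_apply measurableSet_diagonal]
  simp [Set.preimage, Set.diagonal]

lemma ae_injective_pi {ι β : Type*} [Fintype ι] [MeasurableSpace β] [MeasurableEq β]
    {ν : Measure β} [IsProbabilityMeasure ν] [NullSingletonClass ν] :
    ∀ᵐ x ∂Measure.pi (fun _ : ι => ν), Function.Injective x := by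
  have hne : ∀ i j, i ≠ j → ∀ᵐ x ∂Measure.pi (fun _ : ι => ν), x i ≠ x j := by
    intro i j hij
    have hind := (iIndepFun_pi (X := fun _ => id) (μ := fun _ : ι => ν)
      fun _ => aemeasurable_id).indepFun hij
    have : NullSingletonClass ((Measure.pi fun _ : ι => ν).map fun x => x j) := by
      rw [(measurePreserving_eval (fun _ : ι => ν) j).map_eq]; infer_instance
    exact hind.ae_ne (measurable_pi_apply i) (measurable_pi_apply j)
  filter_upwards [ae_all_iff.2 fun i => ae_all_iff.2 fun j => eventually_imp_distrib_left.2
    (hne i j)] with x hx i j hxij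
  by_contra h
  exact hx i j h hxij

lemma measurePreserving_comp_perm {ι β : Type*} [Fintype ι] [MeasurableSpace β]
    (ν : Measure β) [SigmaFinite ν] (σ : Equiv.Perm ι) :
    MeasurePreserving (fun x : ι → β => x ∘ σ) (Measure.pi fun _ => ν)
      (Measure.pi fun _ => ν) := by
  convert measurePreserving_piCongrLeft (fun _ : ι => ν) σ.symm using 1
  ext x i
  simp [MeasurableEquiv.piCongrLeft, Equiv.piCongrLeft]

section Exchangeability

variable {n : ℕ} {ν : Measure ℝ} [IsProbabilityMeasure ν]

lemma Itil1_coord_comp (σ : Equiv.Perm (Fin n)) (x : Fin n → ℝ) (i j : Fin n) :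
    Itil1 coord i j (x ∘ σ) = Itil1 coord (σ i) (σ j) x := by
  have hrank : ∀ k, rank1 coord k (x ∘ σ) = rank1 coord (σ k) x := fun k =>
    Equiv.sum_comp σ (fun l => if x l ≤ x (σ k) then (1 : ℝ) else 0)
  simp only [Itil1, I1, hrank, EmbeddingLike.apply_eq_iff_eq]

lemma integral_Itil1_sq_mul_Itil1_perm (σ : Equiv.Perm (Fin n)) (a b c d : Fin n) :
    ∫ x, Itil1 coord (σ a) (σ b) x ^ 2 * Itil1 coord (σ c) (σ d) x ∂Measure.pi (fun _ => ν)
      = ∫ x, Itil1 coord a b x ^ 2 * Itil1 coord c d x ∂Measure.pi (fun _ => ν) := by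
  have hg : Measurable fun x : Fin n → ℝ => Itil1 coord a b x ^ 2 * Itil1 coord c d x :=
    ((measurable_Itil1 measurable_pi_apply a b).pow_const 2).mul
      (measurable_Itil1 measurable_pi_apply c d)
  have hσ := measurePreserving_comp_perm ν σ
  simp only [← Itil1_coord_comp]
  rw [← integral_map hσ.measurable.aemeasurable hg.aestronglyMeasurable, hσ.map_eq]

theorem abs_integral_Itil1_sq_mul_Itil1_le [NullSingletonClass ν] {a b c d : Fin n}
    (hab : a ≠ b) (hcd : c ≠ d) (hc : c ∉ ({a, b} : Finset (Fin n)))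
    (hd : d ∉ ({a, b} : Finset (Fin n))) :
    ((n : ℝ) - 2) * (n - 3) *
        |∫ x, Itil1 coord a b x ^ 2 * Itil1 coord c d x ∂Measure.pi (fun _ => ν)| ≤ 256 * n := by
  set π := Measure.pi fun _ : Fin n => ν
  set s := (univ \ {a, b} : Finset (Fin n)).offDiag
  let Z : Fin n × Fin n → (Fin n → ℝ) → ℝ := fun p x =>
    Itil1 coord a b x ^ 2 * Itil1 coord p.1 p.2 x
  have hZ_int : ∀ p, Integrable (Z p) π := fun p =>
    .of_bound (((measurable_Itil1 measurable_pi_apply a b).pow_const 2).mul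
      (measurable_Itil1 measurable_pi_apply p.1 p.2)).aestronglyMeasurable (4 ^ 2 * 4)
      (ae_of_all _ fun x => by
        rw [Real.norm_eq_abs, abs_mul, abs_pow]
        gcongr <;> exact abs_Itil1_le _ _ _ _)
  have hZ_eq : ∀ p ∈ s, ∫ x, Z p x ∂π = ∫ x, Z (c, d) x ∂π := by
    intro p hp
    have hp' := mem_offDiag.mp hp
    obtain ⟨σ, hσ⟩ := Equiv.Perm.exists_extending_pair _ _
      (injective_vecCons_four hab hp'.2.2 (mem_sdiff.mp hp'.1).2 (mem_sdiff.mp hp'.2.1).2)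
      (injective_vecCons_four hab hcd hc hd)
    have hperm := integral_Itil1_sq_mul_Itil1_perm (ν := ν) σ a b p.1 p.2
    rw [show σ a = a from hσ 0, show σ b = b from hσ 1, show σ p.1 = c from hσ 2,
      show σ p.2 = d from hσ 3] at hperm
    exact hperm.symm
  have hsum_bound : ∀ᵐ x ∂π, ‖∑ p ∈ s, Z p x‖ ≤ 256 * n := by
    filter_upwards [ae_injective_pi] with x hx
    have h1 := abs_Itil1_le coord a b x
    have h2 := abs_sum_offDiag_compl_Itil1_coord_le hx {a, b}
    rw [card_pair hab] at h2
    rw [Real.norm_eq_abs, ← mul_sum, abs_mul, abs_pow]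
    calc _ ≤ 4 ^ 2 * (8 * ((2 : ℕ) : ℝ) * n) := by gcongr
      _ = 256 * n := by norm_num; ring
  calc ((n : ℝ) - 2) * (n - 3) * |∫ x, Z (c, d) x ∂π|
      = |∑ p ∈ s, ∫ x, Z p x ∂π| := by
        rw [sum_congr rfl hZ_eq, sum_const, nsmul_eq_mul, abs_mul, Nat.abs_cast,
          card_offDiag_compl_pair hab]
    _ = ‖∫ x, ∑ p ∈ s, Z p x ∂π‖ := by
        rw [integral_finsetSum _ fun p _ => hZ_int p, Real.norm_eq_abs]
    _ ≤ 256 * n := by simpa using norm_integral_le_of_norm_le_const hsum_bound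

end Exchangeability

section IID

variable {Ω : Type} [MeasurableSpace Ω] {n : ℕ} {X : Fin n → Ω → ℝ} {P : Measure Ω}

lemma IID1.nullSingletonClass_map [IsProbabilityMeasure P] (hX : IID1 X P) (i : Fin n) :
    NullSingletonClass (P.map (X i)) := by
  have : IsProbabilityMeasure (P.map (X i)) :=
    Measure.isProbabilityMeasure_map (hX.1 i).aemeasurable
  refine nullSingletonClass_of_continuous_cdf ?_
  convert hX.2.2.2 i using 1
  ext t
  rw [cdf_eq_real, measureReal_def, Measure.map_apply (hX.1 i) measurableSet_Iic]
  rfl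

lemma IID1.map_eq_pi (hX : IID1 X P) (i : Fin n) :
    P.map (fun ω k => X k ω) = Measure.pi fun _ => P.map (X i) := by
  rw [hX.2.1.map_fun_eq_pi_map fun k => (hX.1 k).aemeasurable]
  simp_rw [hX.2.2.1 _ i]

lemma IID1.integral_eq_integral_pi (hX : IID1 X P) (i : Fin n) {f : (Fin n → ℝ) → ℝ}
    (hf : Measurable f) :
    ∫ ω, f (fun k => X k ω) ∂P = ∫ x, f x ∂Measure.pi fun _ => P.map (X i) := by
  rw [← hX.map_eq_pi i, integral_map (measurable_pi_lambda _ hX.1).aemeasurable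
    hf.aestronglyMeasurable]

end IID

/-- There is a constant `C > 0` such that for every `n ≥ 4` and every
model as in the setup, `|E[(Ĩ_{1,2})²·Ĩ_{3,4}]| ≤ C/n` (the indices `1,2,3,4` being
pairwise distinct). -/
theorem stmt_13 :
    ∃ C > (0 : ℝ), ∀ (n : ℕ) (hn : 4 ≤ n),
      ∀ (Ω : Type) [MeasurableSpace Ω] (P : Measure Ω), IsProbabilityMeasure P →
      ∀ X : Fin n → Ω → ℝ, IID1 X P →
      |∫ ω, (Itil1 X ⟨0, by omega⟩ ⟨1, by omega⟩ ω) ^ 2 *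
          Itil1 X ⟨2, by omega⟩ ⟨3, by omega⟩ ω ∂ P| ≤ C / n := by
  refine ⟨2048, by norm_num, fun n hn Ω _ P _ X hX => ?_⟩
  set a : Fin n := ⟨0, by omega⟩
  set b : Fin n := ⟨1, by omega⟩
  set c : Fin n := ⟨2, by omega⟩
  set d : Fin n := ⟨3, by omega⟩
  set ν := P.map (X a)
  have : IsProbabilityMeasure ν := Measure.isProbabilityMeasure_map (hX.1 a).aemeasurable
  have : NullSingletonClass ν := hX.nullSingletonClass_map a
  have hmeas : ∀ i j : Fin n, Measurable (Itil1 coord i j) := measurable_Itil1 measurable_pi_apply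
  have hint : ∫ ω, Itil1 X a b ω ^ 2 * Itil1 X c d ω ∂P
      = ∫ x, Itil1 coord a b x ^ 2 * Itil1 coord c d x ∂Measure.pi fun _ => ν :=
    hX.integral_eq_integral_pi a (f := fun x => Itil1 coord a b x ^ 2 * Itil1 coord c d x)
      (((hmeas a b).pow_const 2).mul (hmeas c d))
  rw [hint]
  have hbound := abs_integral_Itil1_sq_mul_Itil1_le (ν := ν) (a := a) (b := b) (c := c) (d := d)
    (by simp [a, b, Fin.ext_iff]) (by simp [c, d, Fin.ext_iff])
    (by simp [a, b, c, Fin.ext_iff]) (by simp [a, b, d, Fin.ext_iff])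
  set J := |∫ x, Itil1 coord a b x ^ 2 * Itil1 coord c d x ∂Measure.pi fun _ => ν|
  have hJ : 0 ≤ J := abs_nonneg _
  have hn' : (4 : ℝ) ≤ n := by exact_mod_cast hn
  have hsq : (n : ℝ) ^ 2 ≤ 8 * ((n - 2) * (n - 3)) := by nlinarith
  rw [le_div_iff₀ (by positivity)]
  refine le_of_mul_le_mul_right ?_ (by positivity : (0 : ℝ) < n)
  nlinarith
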